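/- Fix N_x ≥ 1 and grid functions ρ : Fin (N_x+2) × Fin (N_x+2) → ℝ and ψ : Fin (N_x+2) × Fin (N_x+2) → ℝ (indices 0 and N_x+1 being ghost nodes). Assume the periodic extension in the first index (ρ_{0,j} = ρ_{N_x,j}, ρ_{N_x+1,j} = ρ_{1,j}), the even extension in the second index (ρ_{i,0} = ρ_{i,1}, ρ_{i,N_x+1} = ρ_{i,N_x}), and the odd extension of the flux speed (ψ_{i,0} = −ψ_{i,1}, ψ_{i,N_x+1} = −ψ_{i,N_x}). Define for interior indices the fluxes g¹_{i±1/2,j} = (1/2)(υ_j ρ_{i,j} + υ_j ρ_{i±1,j} − |υ_j|(±(ρ_{i±1,j} − ρ_{i,j})/h)) and g²_{i,j±1/2} = (1/2)(ψ_{i,j}ρ_{i,j} + ψ_{i,j±1}ρ_{i,j±1} − max(|ψ_{i,j}|,|ψ_{i,j±1}|)(±(ρ_{i,j±1} − ρ_{i,j})/k)). Then ∑_{i,j=1}^{N_x} ( −(1/h)[g¹_{i+1/2,j} − g¹_{i−1/2,j}] − (1/k)[g²_{i,j+1/2} − g²_{i,j−1/2}] + ε(ρ_{i,j+1} − 2ρ_{i,j}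 + ρ_{i,j−1})/k² ) = 0. -/

import Mathlib

/-!
Each term of the scheme is a difference of interface quantities, so summing over the cells
telescopes it to its two boundary values. In position the boundary fluxes agree by periodicity.
In velocity, at a wall the even density and the odd speed make the Rusanov flux vanish, and the
diffusive flux `ρ_{i,j+1} - ρ_{i,j}` vanishes by the even extension.
-/

open Finset

theorem Finset.sum_Icc_one_sub_pred {G : Type*} [AddCommGroup G] (f : ℕ → G) (n : ℕ) :
    ∑ i ∈ Icc 1 n, (f i - f (i - 1)) = f n - f 0 := by
  induction n with
  | zero => simp
  | succ n ih =>
    rw [sum_Icc_succ_top (by omega), ih, Nat.add_sub_cancel]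
    abel

theorem Finset.sum_Icc_one_second_difference {R : Type*} [CommRing R] (f : ℕ → R) (n : ℕ) :
    ∑ j ∈ Icc 1 n, (f (j + 1) - 2 * f j + f (j - 1)) = (f (n + 1) - f n) - (f 1 - f 0) := by
  have hsplit : ∀ j ∈ Icc 1 n, f (j + 1) - 2 * f j + f (j - 1)
      = (f (j + 1) - f j) - (f (j - 1 + 1) - f (j - 1)) := by
    intro j hj
    rw [Nat.sub_add_cancel (mem_Icc.mp hj).1]
    ring
  rw [sum_congr rfl hsplit, sum_Icc_one_sub_pred (fun j => f (j + 1) - f j)]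

theorem rusanov_mass_conservation_general (Nx : ℕ)
    (h k ε : ℝ)
    (ρ ψ : ℕ → ℕ → ℝ) (υ : ℕ → ℝ)
    (hper0 : ∀ j, ρ 0 j = ρ Nx j) (hper1 : ∀ j, ρ (Nx + 1) j = ρ 1 j)
    (heven0 : ∀ i, ρ i 0 = ρ i 1) (heven1 : ∀ i, ρ i (Nx + 1) = ρ i Nx)
    (hodd0 : ∀ i, ψ i 0 = -ψ i 1) (hodd1 : ∀ i, ψ i (Nx + 1) = -ψ i Nx)
    (g1 g2 : ℕ → ℕ → ℝ)
    (hg1 : ∀ i j, g1 i j = (1 / 2) * (υ j * ρ i j + υ j * ρ (i + 1) j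
      - |υ j| * ((ρ (i + 1) j - ρ i j) / h)))
    (hg2 : ∀ i j, g2 i j = (1 / 2) * (ψ i j * ρ i j + ψ i (j + 1) * ρ i (j + 1)
      - max |ψ i j| |ψ i (j + 1)| * ((ρ i (j + 1) - ρ i j) / k))) :
    ∑ i ∈ Finset.Icc 1 Nx, ∑ j ∈ Finset.Icc 1 Nx,
      (-(1 / h) * (g1 i j - g1 (i - 1) j) - (1 / k) * (g2 i j - g2 i (j - 1))
        + ε * (ρ i (j + 1) - 2 * ρ i j + ρ i (j - 1)) / k ^ 2) = 0 := by
  have hflux_x : ∀ j, ∑ i ∈ Icc 1 Nx, (g1 i j - g1 (i - 1) j) = 0 := fun j => by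
    rw [sum_Icc_one_sub_pred (g1 · j), hg1, hg1, hper1, hper0, sub_self]
  have hflux_v : ∀ i, ∑ j ∈ Icc 1 Nx, (g2 i j - g2 i (j - 1)) = 0 := fun i => by
    rw [sum_Icc_one_sub_pred (g2 i), hg2, hg2, zero_add, hodd1, heven1, hodd0, heven0]
    ring
  have hdiffusion : ∀ i, ∑ j ∈ Icc 1 Nx, (ρ i (j + 1) - 2 * ρ i j + ρ i (j - 1)) = 0 := fun i => by
    rw [sum_Icc_one_second_difference (ρ i), heven1, heven0]
    ring
  calc _ = -(1 / h) * ∑ i ∈ Icc 1 Nx, ∑ j ∈ Icc 1 Nx, (g1 i j - g1 (i - 1) j)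
          - (1 / k) * ∑ i ∈ Icc 1 Nx, ∑ j ∈ Icc 1 Nx, (g2 i j - g2 i (j - 1))
          + ε / k ^ 2 * ∑ i ∈ Icc 1 Nx, ∑ j ∈ Icc 1 Nx, (ρ i (j + 1) - 2 * ρ i j + ρ i (j - 1)) := by
        simp only [mul_sum, ← sum_sub_distrib, ← sum_add_distrib]
        exact sum_congr rfl fun i _ => sum_congr rfl fun j _ => by ring
    _ = 0 := by
        rw [sum_comm]
        simp only [hflux_x, hflux_v, hdiffusion, sum_const_zero, mul_zero, sub_zero, add_zero]

/-- Discrete mass conservation for the finite-volume Rusanov scheme with periodic ghost cells in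
position, even extension of the density in velocity, and odd extension of the flux speed:
the right-hand side of the semi-discrete forward Kolmogorov scheme sums to zero. -/
theorem rusanov_mass_conservation (Nx : ℕ) (hNx : 1 ≤ Nx)
    (h k ε : ℝ) (hh : h ≠ 0) (hk : k ≠ 0)
    (ρ ψ : ℕ → ℕ → ℝ) (υ : ℕ → ℝ)
    (hper0 : ∀ j, ρ 0 j = ρ Nx j) (hper1 : ∀ j, ρ (Nx + 1) j = ρ 1 j)
    (heven0 : ∀ i, ρ i 0 = ρ i 1) (heven1 : ∀ i, ρ i (Nx + 1) = ρ i Nx)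
    (hodd0 : ∀ i, ψ i 0 = -ψ i 1) (hodd1 : ∀ i, ψ i (Nx + 1) = -ψ i Nx)
    (g1 g2 : ℕ → ℕ → ℝ)
    (hg1 : ∀ i j, g1 i j = (1 / 2) * (υ j * ρ i j + υ j * ρ (i + 1) j
      - |υ j| * ((ρ (i + 1) j - ρ i j) / h)))
    (hg2 : ∀ i j, g2 i j = (1 / 2) * (ψ i j * ρ i j + ψ i (j + 1) * ρ i (j + 1)
      - max |ψ i j| |ψ i (j + 1)| * ((ρ i (j + 1) - ρ i j) / k))) :
    ∑ i ∈ Finset.Icc 1 Nx, ∑ j ∈ Finset.Icc 1 Nx,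
      (-(1 / h) * (g1 i j - g1 (i - 1) j) - (1 / k) * (g2 i j - g2 i (j - 1))
        + ε * (ρ i (j + 1) - 2 * ρ i j + ρ i (j - 1)) / k ^ 2) = 0 :=
  rusanov_mass_conservation_general Nx h k ε ρ ψ υ hper0 hper1 heven0 heven1 hodd0 hodd1 g1 g2 hg1
    hg2
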